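/- Let f = Σ_{r=0}^n x_r^{d_1} g_r be a simplicial Nagata polynomial of bidegree (d_1,d_2) (so each g_r is a square-free monomial of degree d_2). Then for 0 ≤ j ≤ d_2: dim_K A_{(0,j)} equals the number of j-element subsets F ⊆ {u_1,…,u_m} such that the product of the variables in F divides at least one g_r; for 1 ≤ i ≤ d_1−1, dim_K A_{(i,j)} = (n+1)·C(d_2,j) (binomial coefficient), with basis the classes of the monomials X_s^i·U_{s_1}⋯U_{s_j} where {u_{s_1},…,u_{s_j}} is a j-element subset of the support of g_s; dim_K A_{(i,0)} = n+1 for 1 ≤ i ≤ d_1; and dim_K A_{(d_1,j)} equals the number of (d_2−j)-element subsets F ⊆ {u_1,…,u_m} whose product divides at least one g_r. -/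

import Mathlib

open MvPolynomial

namespace CW

variable {σ K : Type*} [CommSemiring K]

/-- A generic "monomial contraction-type" action of the polynomial ring on itself,
determined by a structure coefficient `ν c a` (the coefficient produced when the
operator monomial with exponent `a` acts on the monomial with exponent `c`). -/
noncomputable def genAct (ν : (σ →₀ ℕ) → (σ →₀ ℕ) → K) (α f : MvPolynomial σ K) :
    MvPolynomial σ K :=
  Finsupp.sum (AddMonoidAlgebra.coeff α) fun a ca =>
    Finsupp.sum (AddMonoidAlgebra.coeff f) fun c cf => monomial (c - a) (ν c a * (ca * cf))

theorem genAct_zero_left (ν : (σ →₀ ℕ) → (σ →₀ ℕ) → K) (f : MvPolynomial σ K) :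
    genAct ν 0 f = 0 := by
  unfold genAct
  rw [AddMonoidAlgebra.coeff_zero, Finsupp.sum_zero_index]

theorem genAct_zero_right (ν : (σ →₀ ℕ) → (σ →₀ ℕ) → K) (α : MvPolynomial σ K) :
    genAct ν α 0 = 0 := by
  unfold genAct
  simp only [AddMonoidAlgebra.coeff_zero, Finsupp.sum_zero_index, Finsupp.sum_fun_zero]

theorem genAct_add_left (ν : (σ →₀ ℕ) → (σ →₀ ℕ) → K) (α β f : MvPolynomial σ K) :
    genAct ν (α + β) f = genAct ν α f + genAct ν β f := by
  unfold genAct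
  rw [AddMonoidAlgebra.coeff_add]
  apply Finsupp.sum_add_index'
  · intro a
    simp only [mul_zero, zero_mul, map_zero, Finsupp.sum_fun_zero]
  · intro a b₁ b₂
    rw [← Finsupp.sum_add]
    apply Finsupp.sum_congr
    intro c _
    rw [add_mul, mul_add, map_add]

theorem genAct_add_right (ν : (σ →₀ ℕ) → (σ →₀ ℕ) → K) (α f g : MvPolynomial σ K) :
    genAct ν α (f + g) = genAct ν α f + genAct ν α g := by
  unfold genAct
  rw [← Finsupp.sum_add]
  apply Finsupp.sum_congr
  intro a _
  rw [AddMonoidAlgebra.coeff_add]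
  apply Finsupp.sum_add_index'
  · intro c
    simp only [mul_zero, map_zero]
  · intro c c₁ c₂
    rw [mul_add, mul_add, map_add]

theorem genAct_monomial (ν : (σ →₀ ℕ) → (σ →₀ ℕ) → K) (a c : σ →₀ ℕ) (r s : K) :
    genAct ν (monomial a r) (monomial c s) = monomial (c - a) (ν c a * (r * s)) := by
  unfold genAct
  rw [← single_eq_monomial a r, ← single_eq_monomial c s]
  rw [AddMonoidAlgebra.coeff_single, AddMonoidAlgebra.coeff_single]
  rw [Finsupp.sum_single_index, Finsupp.sum_single_index]
  · simp only [mul_zero, map_zero]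
  · simp only [mul_zero, zero_mul, map_zero, Finsupp.sum_fun_zero]

theorem genAct_mul {ν : (σ →₀ ℕ) → (σ →₀ ℕ) → K}
    (hν : ∀ c a b, ν c (a + b) = ν c b * ν (c - b) a) (α β f : MvPolynomial σ K) :
    genAct ν (α * β) f = genAct ν α (genAct ν β f) := by
  induction α using MvPolynomial.induction_on' with
  | add p q hp hq => rw [add_mul, genAct_add_left, hp, hq, genAct_add_left]
  | monomial a r =>
    induction β using MvPolynomial.induction_on' with
    | add p q hp hq =>
      rw [mul_add, genAct_add_left, hp, hq, ← genAct_add_right, genAct_add_left]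
    | monomial b s =>
      induction f using MvPolynomial.induction_on' with
      | add p q hp hq =>
        rw [genAct_add_right, hp, hq, ← genAct_add_right, ← genAct_add_right]
      | monomial c t =>
        rw [monomial_mul, genAct_monomial, genAct_monomial, genAct_monomial,
          show c - (a + b) = c - b - a from by rw [tsub_tsub, add_comm], hν]
        congr 1
        ring

/-- The annihilator ideal of `f` under the action `genAct ν`. -/
noncomputable def annG (ν : (σ →₀ ℕ) → (σ →₀ ℕ) → K)
    (hν : ∀ c a b, ν c (a + b) = ν c b * ν (c - b) a) (f : MvPolynomial σ K) :
    Ideal (MvPolynomial σ K) where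
  carrier := {α | genAct ν α f = 0}
  zero_mem' := genAct_zero_left ν f
  add_mem' := by
    intro a b ha hb
    show genAct ν (a + b) f = 0
    rw [genAct_add_left, ha, hb, add_zero]
  smul_mem' := by
    intro c α hα
    show genAct ν (c * α) f = 0
    rw [genAct_mul hν, hα, genAct_zero_right]

/-- Structure coefficient of the contraction (apolarity) action: `X^a` sends `x^c`
to `x^(c-a)` if `a ≤ c` and to `0` otherwise. -/
noncomputable def cnu (c a : σ →₀ ℕ) : K :=
  open scoped Classical in if a ≤ c then 1 else 0

theorem cnu_mul (c a b : σ →₀ ℕ) :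
    (cnu c (a + b) : K) = cnu c b * cnu (c - b) a := by
  classical
  unfold cnu
  by_cases hb : b ≤ c
  · by_cases ha : a ≤ c - b
    · have h : a + b ≤ c := (le_tsub_iff_right hb).mp ha
      simp [hb, ha, h]
    · have h : ¬ a + b ≤ c := fun h => ha ((le_tsub_iff_right hb).mpr h)
      simp [hb, ha, h]
  · have h : ¬ a + b ≤ c := fun h => hb (le_trans le_add_self h)
    simp [hb, h]

/-- The contraction action `α ∘ f`. -/
noncomputable def cAct (α f : MvPolynomial σ K) : MvPolynomial σ K :=
  genAct cnu α f

/-- The annihilator `Ann(f)` of `f` under the contraction action, as an ideal. -/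
noncomputable def cAnn (f : MvPolynomial σ K) : Ideal (MvPolynomial σ K) :=
  annG cnu cnu_mul f

theorem mem_cAnn {f α : MvPolynomial σ K} : α ∈ cAnn f ↔ cAct α f = 0 := Iff.rfl

/-- The `K`-submodule of polynomials all of whose monomials satisfy `P`. -/
noncomputable def bihom (K : Type*) [CommSemiring K] {σ : Type*} (P : (σ →₀ ℕ) → Prop) :
    Submodule K (MvPolynomial σ K) where
  carrier := {p | ∀ c ∈ p.support, P c}
  zero_mem' := by
    intro c hc
    simp at hc
  add_mem' := by
    classical
    intro p q hp hq c hc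
    rcases Finset.mem_union.mp (MvPolynomial.support_add hc) with h | h
    · exact hp c h
    · exact hq c h
  smul_mem' := by
    intro k p hp c hc
    exact hp c (MvPolynomial.support_smul hc)

/-- The x-degree of an exponent vector. -/
def degX {n m : ℕ} (c : (Fin (n + 1) ⊕ Fin m) →₀ ℕ) : ℕ := ∑ r, c (Sum.inl r)

/-- The u-degree of an exponent vector. -/
def degU {n m : ℕ} (c : (Fin (n + 1) ⊕ Fin m) →₀ ℕ) : ℕ := ∑ k, c (Sum.inr k)

/-- The bihomogeneous component `T_(i,j)`. -/
noncomputable def Tbi (K : Type*) [CommSemiring K] {n m : ℕ} (i j : ℕ) :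
    Submodule K (MvPolynomial (Fin (n + 1) ⊕ Fin m) K) :=
  bihom K fun c => degX c = i ∧ degU c = j

/-- The bigraded component `A_(i,j)` of `A = T ⧸ Ann(f)`: the image of `T_(i,j)`
in the quotient. -/
noncomputable def Abi {K : Type*} [Field K] {n m : ℕ}
    (f : MvPolynomial (Fin (n + 1) ⊕ Fin m) K) (i j : ℕ) :
    Submodule K (MvPolynomial (Fin (n + 1) ⊕ Fin m) K ⧸ cAnn f) :=
  (Tbi K i j).map (Ideal.Quotient.mkₐ K (cAnn f)).toLinearMap

/-!
Since `Ann(f)` is the kernel of `α ↦ α ∘ f`, the classes of monomials `X^e` of bidegree `(i,j)`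
form a basis of `A_(i,j)` as soon as their contractions with `f` are linearly independent and span
the contractions of all monomials of that bidegree. A monomial acts nontrivially on `f` only if it
divides a term `x_r^{d₁} g_r`, i.e. it is `X_r^i U_F` with `F ⊆ supp g_r`, `|F| = j`. For `i > 0`
the index `r` is determined by the `x`-part and `X_r^i U_F ∘ f = x_r^{d₁-i} U_{supp g_r \ F}`: these
are distinct monomials, indexed by the pairs `(r, F)` if `i < d₁` and by the complements
`supp g_r \ F` if `i = d₁`. For `i = 0`, `U_F ∘ f` is the sum of the monomials
`x_r^{d₁} U_{supp g_r \ F}` over the `r` with `F ⊆ supp g_r`, and each such monomial determines `F`,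
so these sums are again independent.
-/

theorem exists_basis_map_of_ker_eq {R M N Q ι : Type*} [Ring R] [Fintype ι]
    [AddCommGroup M] [Module R M] [AddCommGroup N] [Module R N] [AddCommGroup Q] [Module R Q]
    (q : M →ₗ[R] Q) (φ : M →ₗ[R] N) (hker : LinearMap.ker q = LinearMap.ker φ)
    {s : Set M} {v : ι → M} (hv : ∀ p, v p ∈ Submodule.span R s)
    (hli : LinearIndependent R (φ ∘ v))
    (hs : ∀ x ∈ s, φ x ∈ Submodule.span R (Set.range (φ ∘ v))) :
    ∃ b : Module.Basis ι R ((Submodule.span R s).map q), ∀ p, (b p : Q) = q (v p) := by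
  have hker' : ∀ x, q x = 0 ↔ φ x = 0 := fun x => by
    rw [← LinearMap.mem_ker, hker, LinearMap.mem_ker]
  have hqli : LinearIndependent R (q ∘ v) := by
    rw [linearIndependent_iff'] at hli ⊢
    intro t a h p hp
    refine hli t a ?_ p hp
    simpa [map_sum] using (hker' (∑ p ∈ t, a p • v p)).1 (by simpa [map_sum] using h)
  have hspan : Submodule.span R (Set.range (q ∘ v)) = (Submodule.span R s).map q := by
    refine le_antisymm ?_ ?_
    · rw [Submodule.span_le]
      rintro _ ⟨p, rfl⟩
      exact Submodule.mem_map_of_mem (hv p)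
    · rw [Submodule.map_span, Submodule.span_le]
      rintro _ ⟨x, hx, rfl⟩
      obtain ⟨a, ha⟩ := (Submodule.mem_span_range_iff_exists_fun R).1 (hs x hx)
      have hx' : q (x - ∑ p, a p • v p) = 0 := by
        rw [hker']
        simpa [map_sum, sub_eq_zero] using ha.symm
      rw [map_sub, sub_eq_zero, map_sum] at hx'
      rw [SetLike.mem_coe, hx']
      refine Submodule.sum_mem _ fun p _ => ?_
      rw [map_smul]
      exact Submodule.smul_mem _ _ (Submodule.subset_span ⟨p, rfl⟩)
  exact ⟨(Module.Basis.span hqli).map (LinearEquiv.ofEq _ _ hspan), fun p => by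
    simp [Module.Basis.span_apply]⟩

section Contraction

variable {σ K : Type*}

theorem cAct_monomial_monomial [CommSemiring K] (a c : σ →₀ ℕ) (r s : K) :
    cAct (monomial a r) (monomial c s) =
      if a ≤ c then monomial (c - a) (r * s) else 0 := by
  classical
  rw [cAct, genAct_monomial, cnu]
  split_ifs
  · rw [one_mul]
  · rw [zero_mul, map_zero]

theorem cAct_sum [CommSemiring K] {ι : Type*} (s : Finset ι) (α : MvPolynomial σ K)
    (h : ι → MvPolynomial σ K) :
    cAct α (∑ r ∈ s, h r) = ∑ r ∈ s, cAct α (h r) :=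
  map_sum ({ toFun := cAct α, map_zero' := genAct_zero_right cnu α
             map_add' := genAct_add_right cnu α } : MvPolynomial σ K →+ MvPolynomial σ K) h s

theorem cAct_C [CommSemiring K] (k : K) (p : MvPolynomial σ K) : cAct (C k) p = k • p := by
  induction p using MvPolynomial.induction_on' with
  | monomial c t =>
    rw [← monomial_zero', cAct_monomial_monomial, if_pos zero_le, tsub_zero, smul_monomial,
      smul_eq_mul]
  | add p q hp hq => rw [cAct, genAct_add_right, ← cAct, ← cAct, hp, hq, smul_add]

noncomputable def cActL [CommSemiring K] (f : MvPolynomial σ K) :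
    MvPolynomial σ K →ₗ[K] MvPolynomial σ K where
  toFun α := cAct α f
  map_add' α β := genAct_add_left cnu α β f
  map_smul' k α := by
    rw [RingHom.id_apply, smul_eq_C_mul, cAct, genAct_mul cnu_mul, ← cAct, ← cAct, cAct_C]

theorem ker_mkₐ_cAnn_eq_ker_cActL [CommRing K] (f : MvPolynomial σ K) :
    LinearMap.ker (Ideal.Quotient.mkₐ K (cAnn f)).toLinearMap = LinearMap.ker (cActL f) := by
  ext α
  simp only [LinearMap.mem_ker, AlgHom.toLinearMap_apply, Ideal.Quotient.mkₐ_eq_mk,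
    Ideal.Quotient.eq_zero_iff_mem, mem_cAnn]
  rfl

theorem linearIndependent_monomial_one [CommSemiring K] {ι : Type*} {D : ι → σ →₀ ℕ}
    (hD : Function.Injective D) : LinearIndependent K fun p => monomial (D p) (1 : K) :=
  (basisMonomials σ K).linearIndependent.comp D hD

theorem bihom_eq_span [CommSemiring K] (P : (σ →₀ ℕ) → Prop) :
    bihom K P = Submodule.span K ((fun c => monomial c (1 : K)) '' {c | P c}) := by
  refine le_antisymm (fun p hp => ?_) (Submodule.span_le.2 ?_)
  · rw [p.as_sum]
    refine Submodule.sum_mem _ fun c hc => ?_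
    rw [← mul_one (coeff c p), ← smul_eq_mul, ← smul_monomial]
    exact Submodule.smul_mem _ _ (Submodule.subset_span ⟨c, hp c hc, rfl⟩)
  · rintro _ ⟨c, hc, rfl⟩ c' hc'
    rw [Finset.mem_singleton.1 (support_monomial_subset hc')]
    exact hc

theorem exists_basis_map_mkₐ_bihom [CommRing K] (f : MvPolynomial σ K) {ι : Type*} [Fintype ι]
    (P : (σ →₀ ℕ) → Prop) (c : ι → σ →₀ ℕ) (hP : ∀ p, P (c p))
    (hli : LinearIndependent K fun p => cAct (monomial (c p) (1 : K)) f)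
    (hs : ∀ e, P e → cAct (monomial e (1 : K)) f ∈
      Submodule.span K (Set.range fun p => cAct (monomial (c p) (1 : K)) f)) :
    ∃ b : Module.Basis ι K ((bihom K P).map (Ideal.Quotient.mkₐ K (cAnn f)).toLinearMap),
      ∀ p, (b p : MvPolynomial σ K ⧸ cAnn f) = Ideal.Quotient.mk (cAnn f) (monomial (c p) 1) := by
  rw [bihom_eq_span]
  exact exists_basis_map_of_ker_eq _ (cActL f) (ker_mkₐ_cAnn_eq_ker_cActL f)
    (fun p => Submodule.subset_span ⟨c p, hP p, rfl⟩) hli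
    (by rintro _ ⟨e, he, rfl⟩; exact hs e he)

end Contraction

section Exponents

open Finsupp

variable {ι κ : Type*}

theorem sumElim_le_sumElim_iff {a a' : ι →₀ ℕ} {b b' : κ →₀ ℕ} :
    sumElim a b ≤ sumElim a' b' ↔ a ≤ a' ∧ b ≤ b' := by
  simp only [Finsupp.le_def, Sum.forall, sumElim_inl, sumElim_inr]

theorem sumElim_tsub_sumElim (a a' : ι →₀ ℕ) (b b' : κ →₀ ℕ) :
    sumElim a b - sumElim a' b' = sumElim (a - a') (b - b') := by
  ext (_ | _) <;> rfl

theorem sumElim_inj {a a' : ι →₀ ℕ} {b b' : κ →₀ ℕ} :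
    sumElim a b = sumElim a' b' ↔ a = a' ∧ b = b' := by
  refine ⟨fun h => ⟨?_, ?_⟩, fun h => h.1 ▸ h.2 ▸ rfl⟩
  · rw [← comapDomain_inl_sumElim a b, h, comapDomain_inl_sumElim]
  · rw [← comapDomain_inr_sumElim a b, h, comapDomain_inr_sumElim]

theorem le_sumElim_iff {e : ι ⊕ κ →₀ ℕ} {a : ι →₀ ℕ} {b : κ →₀ ℕ} :
    e ≤ sumElim a b ↔ ∃ a' ≤ a, ∃ b' ≤ b, e = sumElim a' b' := by
  constructor
  · intro h
    rw [← comapDomain_sumElim_comapDomain e, sumElim_le_sumElim_iff] at h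
    exact ⟨_, h.1, _, h.2, (comapDomain_sumElim_comapDomain e).symm⟩
  · rintro ⟨a', ha, b', hb, rfl⟩
    exact sumElim_le_sumElim_iff.2 ⟨ha, hb⟩

theorem le_single_iff_exists {a : ι →₀ ℕ} {r : ι} {d : ℕ} :
    a ≤ single r d ↔ ∃ i ≤ d, a = single r i := by
  constructor
  · intro h
    obtain ⟨i, rfl⟩ := support_subset_singleton'.1 ((support_mono h).trans support_single_subset)
    exact ⟨i, single_le_single.1 h, rfl⟩
  · rintro ⟨i, hi, rfl⟩
    exact single_le_single.2 hi

noncomputable def sqfreeExp (F : Finset κ) : κ →₀ ℕ := ∑ k ∈ F, single k 1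

theorem sqfreeExp_apply [DecidableEq κ] (F : Finset κ) (k : κ) :
    sqfreeExp F k = if k ∈ F then 1 else 0 := by
  rw [sqfreeExp, Finset.sum_apply']
  simp [single_apply]

theorem sqfreeExp_le_sqfreeExp_iff {F G : Finset κ} : sqfreeExp F ≤ sqfreeExp G ↔ F ⊆ G := by
  classical
  refine ⟨fun h k hk => ?_, fun h k => ?_⟩
  · have := h k
    rw [sqfreeExp_apply, sqfreeExp_apply, if_pos hk] at this
    by_contra hkG
    rw [if_neg hkG] at this
    omega
  · rw [sqfreeExp_apply, sqfreeExp_apply]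
    split_ifs with hF hG <;> first | omega | exact absurd (h hF) hG

theorem sqfreeExp_tsub_sqfreeExp [DecidableEq κ] (F G : Finset κ) :
    sqfreeExp G - sqfreeExp F = sqfreeExp (G \ F) := by
  ext k
  simp only [tsub_apply, sqfreeExp_apply, Finset.mem_sdiff]
  split_ifs <;> simp_all

theorem sqfreeExp_injective : Function.Injective (sqfreeExp : Finset κ → κ →₀ ℕ) :=
  fun _ _ h => le_antisymm (sqfreeExp_le_sqfreeExp_iff.1 h.le) (sqfreeExp_le_sqfreeExp_iff.1 h.ge)

theorem degree_sqfreeExp (F : Finset κ) : (sqfreeExp F).degree = F.card := by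
  simp [sqfreeExp, map_sum, degree_single]

theorem sqfreeExp_support {b : κ →₀ ℕ} (hb : ∀ k, b k ≤ 1) : sqfreeExp b.support = b := by
  classical
  ext k
  have := hb k
  simp only [sqfreeExp_apply, Finsupp.mem_support_iff]
  split_ifs <;> omega

theorem le_sqfreeExp_iff {b : κ →₀ ℕ} {G : Finset κ} :
    b ≤ sqfreeExp G ↔ ∃ F ⊆ G, b = sqfreeExp F := by
  classical
  constructor
  · intro h
    have hb : ∀ k, b k ≤ 1 := fun k => (h k).trans (by rw [sqfreeExp_apply]; split_ifs <;> omega)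
    rw [← sqfreeExp_support hb] at h ⊢
    exact ⟨_, sqfreeExp_le_sqfreeExp_iff.1 h, rfl⟩
  · rintro ⟨F, hF, rfl⟩
    exact sqfreeExp_le_sqfreeExp_iff.2 hF

end Exponents

section Counting

variable {ι α : Type*} [Fintype ι] [DecidableEq α]

theorem eq_of_sdiff_eq_sdiff_of_subset {G F F' : Finset α} (hF : F ⊆ G) (hF' : F' ⊆ G)
    (h : G \ F = G \ F') : F = F' := by
  rw [← Finset.sdiff_sdiff_eq_self hF, h, Finset.sdiff_sdiff_eq_self hF']

variable [Fintype α]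

theorem card_subtype_card_eq_and_subset (G : ι → Finset α) (j : ℕ) :
    Fintype.card {p : ι × Finset α // p.2.card = j ∧ p.2 ⊆ G p.1} = ∑ r, (G r).card.choose j := by
  rw [Fintype.card_congr (Equiv.subtypeProdEquivSigmaSubtype fun r F => F.card = j ∧ F ⊆ G r),
    Fintype.card_sigma]
  refine Finset.sum_congr rfl fun r _ => ?_
  rw [Fintype.card_subtype, ← Finset.card_powersetCard]
  congr 1
  ext F
  simp [Finset.mem_powersetCard, and_comm]

theorem card_filter_powersetCard_exists_subset {G : ι → Finset α} (hG : Function.Injective G)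
    {d : ℕ} (hcard : ∀ r, (G r).card = d) :
    ((Finset.univ.powersetCard d).filter fun F => ∃ r, F ⊆ G r).card = Fintype.card ι := by
  have : ((Finset.univ.powersetCard d).filter fun F => ∃ r, F ⊆ G r) = Finset.univ.image G := by
    ext F
    simp only [Finset.mem_filter, Finset.mem_powersetCard, Finset.subset_univ, true_and,
      Finset.mem_image, Finset.mem_univ]
    constructor
    · rintro ⟨hF, r, hr⟩
      exact ⟨r, (Finset.eq_of_subset_of_card_le hr (by rw [hF, hcard])).symm⟩
    · rintro ⟨r, rfl⟩
      exact ⟨hcard r, r, subset_rfl⟩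
  rw [this, Finset.card_image_of_injective _ hG, Finset.card_univ]

end Counting

section Bigraded

variable {n m : ℕ}

theorem degX_sumElim (a : Fin (n + 1) →₀ ℕ) (b : Fin m →₀ ℕ) :
    degX (Finsupp.sumElim a b) = a.degree :=
  (Finsupp.degree_eq_sum a).symm

theorem degU_sumElim (a : Fin (n + 1) →₀ ℕ) (b : Fin m →₀ ℕ) :
    degU (Finsupp.sumElim a b) = b.degree :=
  (Finsupp.degree_eq_sum b).symm

theorem X_inl_pow_mul_monomial_mapDomain_inr {K : Type*} [CommSemiring K] (r : Fin (n + 1))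
    (i : ℕ) (b : Fin m →₀ ℕ) :
    X (Sum.inl r) ^ i * monomial (b.mapDomain Sum.inr) (1 : K) =
      monomial (Finsupp.sumElim (Finsupp.single r i) b) 1 := by
  rw [X_pow_eq_monomial, monomial_mul, one_mul, Finsupp.sumElim_eq_add, Finsupp.mapDomain_single]

theorem exists_basis_Abi {K : Type*} [Field K] (f : MvPolynomial (Fin (n + 1) ⊕ Fin m) K)
    (i j : ℕ) {ι : Type*} [Fintype ι] (c : ι → Fin (n + 1) ⊕ Fin m →₀ ℕ)
    (hc : ∀ p, degX (c p) = i ∧ degU (c p) = j)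
    (hli : LinearIndependent K fun p => cAct (monomial (c p) (1 : K)) f)
    (hs : ∀ e, degX e = i → degU e = j → cAct (monomial e (1 : K)) f ∈
      Submodule.span K (Set.range fun p => cAct (monomial (c p) (1 : K)) f)) :
    ∃ b : Module.Basis ι K (Abi f i j),
      ∀ p, (b p : _ ⧸ cAnn f) = Ideal.Quotient.mk (cAnn f) (monomial (c p) 1) :=
  exists_basis_map_mkₐ_bihom f _ c hc hli fun e he => hs e he.1 he.2

end Bigraded

section Nagata

open Finsupp (sumElim single)

variable {K : Type*} {n m : ℕ} (d₁ : ℕ) (G : Fin (n + 1) → Finset (Fin m))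

noncomputable def nagataExp (r : Fin (n + 1)) : Fin (n + 1) ⊕ Fin m →₀ ℕ :=
  sumElim (single r d₁) (sqfreeExp (G r))

variable (K) in
/-- A simplicial Nagata polynomial `∑ x_r^{d₁} g_r`, encoded by the supports `G r` of the
square-free monomials `g_r`. -/
noncomputable def nagataPoly [CommSemiring K] : MvPolynomial (Fin (n + 1) ⊕ Fin m) K :=
  ∑ r, monomial (nagataExp d₁ G r) 1

section Action

variable [CommSemiring K]

theorem cAct_monomial_nagataPoly (e : Fin (n + 1) ⊕ Fin m →₀ ℕ) :
    cAct (monomial e (1 : K)) (nagataPoly K d₁ G) =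
      ∑ r, if e ≤ nagataExp d₁ G r then monomial (nagataExp d₁ G r - e) 1 else 0 := by
  simp only [nagataPoly, cAct_sum, cAct_monomial_monomial, one_mul]

variable {d₁ G}

theorem le_nagataExp_iff {e : Fin (n + 1) ⊕ Fin m →₀ ℕ} {r : Fin (n + 1)} :
    e ≤ nagataExp d₁ G r ↔ ∃ i ≤ d₁, ∃ F ⊆ G r, e = sumElim (single r i) (sqfreeExp F) := by
  simp only [nagataExp, le_sumElim_iff, le_single_iff_exists, le_sqfreeExp_iff]
  constructor
  · rintro ⟨_, ⟨i, hi, rfl⟩, _, ⟨F, hF, rfl⟩, rfl⟩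
    exact ⟨i, hi, F, hF, rfl⟩
  · rintro ⟨i, hi, F, hF, rfl⟩
    exact ⟨_, ⟨i, hi, rfl⟩, _, ⟨F, hF, rfl⟩, rfl⟩

theorem cAct_monomial_nagataPoly_mem {W : Submodule K (MvPolynomial (Fin (n + 1) ⊕ Fin m) K)}
    {i j : ℕ} (hW : ∀ r, ∀ F ⊆ G r, F.card = j →
      cAct (monomial (sumElim (single r i) (sqfreeExp F)) (1 : K)) (nagataPoly K d₁ G) ∈ W)
    {e : Fin (n + 1) ⊕ Fin m →₀ ℕ} (hx : degX e = i) (hu : degU e = j) :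
    cAct (monomial e (1 : K)) (nagataPoly K d₁ G) ∈ W := by
  by_cases h0 : cAct (monomial e (1 : K)) (nagataPoly K d₁ G) = 0
  · rw [h0]
    exact W.zero_mem
  rw [cAct_monomial_nagataPoly] at h0
  obtain ⟨r, -, hr⟩ := Finset.exists_ne_zero_of_sum_ne_zero h0
  obtain ⟨i', -, F, hF, rfl⟩ := le_nagataExp_iff.1 (by_contra fun h => hr (if_neg h))
  rw [degX_sumElim, Finsupp.degree_single] at hx
  rw [degU_sumElim, degree_sqfreeExp] at hu
  exact hx ▸ hW r F hF hu

theorem cAct_monomial_nagataPoly_of_ne_zero {s : Fin (n + 1)} {i : ℕ} {F : Finset (Fin m)}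
    (hi0 : i ≠ 0) (hi : i ≤ d₁) (hF : F ⊆ G s) :
    cAct (monomial (sumElim (single s i) (sqfreeExp F)) (1 : K)) (nagataPoly K d₁ G) =
      monomial (sumElim (single s (d₁ - i)) (sqfreeExp (G s \ F))) 1 := by
  rw [cAct_monomial_nagataPoly, Finset.sum_eq_single s,
    if_pos (le_nagataExp_iff.2 ⟨i, hi, F, hF, rfl⟩), nagataExp, sumElim_tsub_sumElim,
    ← Finsupp.single_tsub, sqfreeExp_tsub_sqfreeExp]
  · intro r _ hrs
    refine if_neg fun hle => hi0 ?_
    rw [nagataExp, sumElim_le_sumElim_iff, Finsupp.single_le_iff,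
      Finsupp.single_eq_of_ne hrs.symm] at hle
    exact Nat.le_zero.1 hle.1
  · exact fun h => absurd (Finset.mem_univ s) h

theorem cAct_monomial_nagataPoly_top {s : Fin (n + 1)} {F : Finset (Fin m)} (hd₁ : d₁ ≠ 0)
    (hF : F ⊆ G s) :
    cAct (monomial (sumElim (single s d₁) (sqfreeExp F)) (1 : K)) (nagataPoly K d₁ G) =
      monomial (sumElim 0 (sqfreeExp (G s \ F))) 1 := by
  rw [cAct_monomial_nagataPoly_of_ne_zero hd₁ le_rfl hF, Nat.sub_self, Finsupp.single_zero]

theorem cAct_monomial_nagataPoly_of_degX_eq_zero (F : Finset (Fin m)) :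
    cAct (monomial (sumElim 0 (sqfreeExp F)) (1 : K)) (nagataPoly K d₁ G) =
      ∑ r, if F ⊆ G r then monomial (sumElim (single r d₁) (sqfreeExp (G r \ F))) 1 else 0 := by
  rw [cAct_monomial_nagataPoly]
  refine Finset.sum_congr rfl fun r _ => ?_
  simp only [nagataExp, sumElim_le_sumElim_iff, zero_le, true_and, sqfreeExp_le_sqfreeExp_iff,
    sumElim_tsub_sumElim, tsub_zero, sqfreeExp_tsub_sqfreeExp]

theorem coeff_cAct_monomial_nagataPoly_of_degX_eq_zero (hd₁ : d₁ ≠ 0) {r : Fin (n + 1)}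
    {F F' : Finset (Fin m)} (hF : F ⊆ G r) :
    coeff (sumElim (single r d₁) (sqfreeExp (G r \ F)))
      (cAct (monomial (sumElim 0 (sqfreeExp F')) (1 : K)) (nagataPoly K d₁ G)) =
        if F = F' then 1 else 0 := by
  rw [cAct_monomial_nagataPoly_of_degX_eq_zero, coeff_sum, Finset.sum_eq_single r]
  · by_cases hFF' : F = F'
    · subst hFF'
      rw [if_pos hF, coeff_monomial, if_pos rfl, if_pos rfl]
    rw [if_neg hFF']
    split_ifs with hF'
    · rw [coeff_monomial, if_neg]
      exact fun h => hFF' (eq_of_sdiff_eq_sdiff_of_subset hF hF'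
        (sqfreeExp_injective (sumElim_inj.1 h).2).symm)
    · exact coeff_zero _
  · intro r' _ hr'
    split_ifs
    · rw [coeff_monomial, if_neg]
      exact fun h => hr' ((Finsupp.single_left_inj hd₁).1 (sumElim_inj.1 h).1)
    · exact coeff_zero _
  · exact fun h => absurd (Finset.mem_univ r) h

end Action

variable [Field K] {d₁ G}

theorem exists_basis_Abi_nagataPoly_of_lt {i : ℕ} (hi0 : i ≠ 0) (hi : i < d₁) (j : ℕ) :
    ∃ b : Module.Basis {p : Fin (n + 1) × Finset (Fin m) // p.2.card = j ∧ p.2 ⊆ G p.1} K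
        (Abi (nagataPoly K d₁ G) i j),
      ∀ p, (b p : _ ⧸ cAnn (nagataPoly K d₁ G)) =
        Ideal.Quotient.mk _ (monomial (sumElim (single p.1.1 i) (sqfreeExp p.1.2)) 1) := by
  have hinj : Function.Injective fun p : {p : Fin (n + 1) × Finset (Fin m) //
      p.2.card = j ∧ p.2 ⊆ G p.1} =>
      sumElim (single p.1.1 (d₁ - i)) (sqfreeExp (G p.1.1 \ p.1.2)) := by
    intro ⟨⟨r, F⟩, _, hF⟩ ⟨⟨r', F'⟩, _, hF'⟩ h
    obtain ⟨hr, hF''⟩ := sumElim_inj.1 h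
    obtain rfl := (Finsupp.single_left_inj (by omega)).1 hr
    obtain rfl := eq_of_sdiff_eq_sdiff_of_subset hF hF' (sqfreeExp_injective hF'')
    rfl
  refine exists_basis_Abi _ i j _ (fun p => ?_) ?_ fun e hx hu => ?_
  · rw [degX_sumElim, degU_sumElim, Finsupp.degree_single, degree_sqfreeExp]
    exact ⟨rfl, p.2.1⟩
  · rw [funext fun p => cAct_monomial_nagataPoly_of_ne_zero hi0 hi.le p.2.2]
    exact linearIndependent_monomial_one hinj
  · refine cAct_monomial_nagataPoly_mem (fun r F hF hFj => ?_) hx hu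
    exact Submodule.subset_span ⟨⟨(r, F), hFj, hF⟩, rfl⟩

theorem finrank_Abi_nagataPoly_of_lt {d₂ : ℕ} (hG : ∀ r, (G r).card = d₂) {i : ℕ} (hi0 : i ≠ 0)
    (hi : i < d₁) (j : ℕ) :
    Module.finrank K (Abi (nagataPoly K d₁ G) i j) = (n + 1) * d₂.choose j := by
  obtain ⟨b, -⟩ := exists_basis_Abi_nagataPoly_of_lt (K := K) (G := G) hi0 hi j
  simp [Module.finrank_eq_card_basis b, card_subtype_card_eq_and_subset, hG]

theorem finrank_Abi_nagataPoly_zero (hd₁ : d₁ ≠ 0) (j : ℕ) :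
    Module.finrank K (Abi (nagataPoly K d₁ G) 0 j) =
      ((Finset.univ.powersetCard j).filter fun F => ∃ r, F ⊆ G r).card := by
  set S := (Finset.univ.powersetCard j).filter fun F => ∃ r, F ⊆ G r
  have hS : ∀ F, F ∈ S ↔ F.card = j ∧ ∃ r, F ⊆ G r := by simp [S, Finset.mem_powersetCard]
  choose r hr using fun F : S => ((hS F).1 F.2).2
  obtain ⟨b, -⟩ := exists_basis_Abi (nagataPoly K d₁ G) 0 j
    (fun F : S => sumElim 0 (sqfreeExp F.1))
    (fun F => by
      rw [degX_sumElim, degU_sumElim, degree_sqfreeExp, map_zero, ((hS F).1 F.2).1]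
      exact ⟨rfl, rfl⟩)
    (LinearIndependent.of_pairwise_dual_eq_zero_one _
      (fun F => lcoeff K (sumElim (single (r F) d₁) (sqfreeExp (G (r F) \ F))))
      (fun F F' h => by
        simp [lcoeff_apply, coeff_cAct_monomial_nagataPoly_of_degX_eq_zero hd₁ (hr F),
          Subtype.ext_iff.not.1 h])
      (fun F => by simp [lcoeff_apply, coeff_cAct_monomial_nagataPoly_of_degX_eq_zero hd₁ (hr F)]))
    fun e hx hu => cAct_monomial_nagataPoly_mem (fun r' F hF hFj => by
      rw [Finsupp.single_zero]
      exact Submodule.subset_span ⟨⟨F, (hS F).2 ⟨hFj, r', hF⟩⟩, rfl⟩) hx hu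
  rw [Module.finrank_eq_card_basis b, Fintype.card_coe]

theorem finrank_Abi_nagataPoly_top (hd₁ : d₁ ≠ 0) {d₂ : ℕ} (hG : ∀ r, (G r).card = d₂) {j : ℕ}
    (hj : j ≤ d₂) :
    Module.finrank K (Abi (nagataPoly K d₁ G) d₁ j) =
      ((Finset.univ.powersetCard (d₂ - j)).filter fun F => ∃ r, F ⊆ G r).card := by
  set S := (Finset.univ.powersetCard (d₂ - j)).filter fun F => ∃ r, F ⊆ G r
  have hS : ∀ F, F ∈ S ↔ F.card = d₂ - j ∧ ∃ r, F ⊆ G r := by simp [S, Finset.mem_powersetCard]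
  choose r hr using fun F : S => ((hS F).1 F.2).2
  have himage : ∀ F : S,
      cAct (monomial (sumElim (single (r F) d₁) (sqfreeExp (G (r F) \ F))) (1 : K))
        (nagataPoly K d₁ G) = monomial (sumElim 0 (sqfreeExp F)) 1 := fun F => by
    rw [cAct_monomial_nagataPoly_top hd₁ Finset.sdiff_subset, Finset.sdiff_sdiff_eq_self (hr F)]
  obtain ⟨b, -⟩ := exists_basis_Abi (nagataPoly K d₁ G) d₁ j
    (fun F : S => sumElim (single (r F) d₁) (sqfreeExp (G (r F) \ F)))
    (fun F => by
      rw [degX_sumElim, degU_sumElim, degree_sqfreeExp, Finsupp.degree_single,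
        Finset.card_sdiff_of_subset (hr F), hG, ((hS F).1 F.2).1, Nat.sub_sub_self hj]
      exact ⟨rfl, rfl⟩)
    (by
      rw [funext himage]
      exact linearIndependent_monomial_one fun F F' h =>
        Subtype.ext (sqfreeExp_injective (sumElim_inj.1 h).2))
    fun e hx hu => cAct_monomial_nagataPoly_mem (fun r' F' hF' hF'j => by
      have hmem : G r' \ F' ∈ S :=
        (hS _).2 ⟨by rw [Finset.card_sdiff_of_subset hF', hG, hF'j], r', Finset.sdiff_subset⟩
      rw [cAct_monomial_nagataPoly_top hd₁ hF', ← himage ⟨_, hmem⟩]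
      exact Submodule.subset_span ⟨_, rfl⟩) hx hu
  rw [Module.finrank_eq_card_basis b, Fintype.card_coe]

end Nagata

open MvPolynomial in
theorem stmt_5_general {K : Type*} [Field K] (n m d₁ d₂ : ℕ)
    (hd₁ : 1 ≤ d₁)
    (g : Fin (n + 1) → (Fin m →₀ ℕ))
    (hgdeg : ∀ r, (∑ k, g r k) = d₂)
    (hginj : Function.Injective g)
    (hsqfree : ∀ r k, g r k ≤ 1)
    (f : MvPolynomial (Fin (n + 1) ⊕ Fin m) K)
    (hf : f = ∑ r, X (Sum.inl r) ^ d₁ * monomial ((g r).mapDomain Sum.inr) 1) :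
    -- `dim A_(0,j)` is the number of `j`-element subsets whose product divides some `g_r`
    (∀ j ≤ d₂, Module.finrank K (Abi f 0 j) =
      (((Finset.univ : Finset (Fin m)).powersetCard j).filter
        fun F => ∃ r, ∀ k ∈ F, 1 ≤ g r k).card) ∧
    -- for `1 ≤ i ≤ d₁ - 1`, `dim A_(i,j) = (n+1)·C(d₂,j)`, with the stated basis
    (∀ i, 1 ≤ i → i ≤ d₁ - 1 → ∀ j ≤ d₂,
      (∃ b : Module.Basis {p : Fin (n + 1) × Finset (Fin m) //
          p.2.card = j ∧ ∀ k ∈ p.2, 1 ≤ g p.1 k} K (Abi f i j),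
        ∀ p, (b p : MvPolynomial (Fin (n + 1) ⊕ Fin m) K ⧸ cAnn f) =
          Ideal.Quotient.mk (cAnn f)
            (X (Sum.inl (p : Fin (n + 1) × Finset (Fin m)).1) ^ i *
              monomial ((∑ k ∈ (p : Fin (n + 1) × Finset (Fin m)).2,
                Finsupp.single k 1).mapDomain Sum.inr) 1)) ∧
      Module.finrank K (Abi f i j) = (n + 1) * d₂.choose j) ∧
    -- `dim A_(i,0) = n + 1` for `1 ≤ i ≤ d₁`
    (∀ i, 1 ≤ i → i ≤ d₁ → Module.finrank K (Abi f i 0) = n + 1) ∧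
    -- `dim A_(d₁,j)` is the number of `(d₂-j)`-element subsets whose product
    -- divides some `g_r`
    (∀ j ≤ d₂, Module.finrank K (Abi f d₁ j) =
      (((Finset.univ : Finset (Fin m)).powersetCard (d₂ - j)).filter
        fun F => ∃ r, ∀ k ∈ F, 1 ≤ g r k).card) := by
  set G : Fin (n + 1) → Finset (Fin m) := fun r => (g r).support
  have hgG : ∀ r, g r = sqfreeExp (G r) := fun r => (sqfreeExp_support (hsqfree r)).symm
  have hG : ∀ r, (G r).card = d₂ := fun r => by
    rw [← degree_sqfreeExp, ← hgG, Finsupp.degree_eq_sum, hgdeg]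
  have hsub : ∀ r F, (∀ k ∈ F, 1 ≤ g r k) ↔ F ⊆ G r := fun r F =>
    forall₂_congr fun k _ => Nat.one_le_iff_ne_zero.trans Finsupp.mem_support_iff.symm
  have hfilter : ∀ l, ((Finset.univ.powersetCard l).filter fun F => ∃ r, ∀ k ∈ F, 1 ≤ g r k) =
      (Finset.univ.powersetCard l).filter fun F => ∃ r, F ⊆ G r := fun l =>
    Finset.filter_congr fun F _ => exists_congr fun r => hsub r F
  have hd₁' : d₁ ≠ 0 := by omega
  obtain rfl : f = nagataPoly K d₁ G := by
    simp only [hf, nagataPoly, nagataExp, X_inl_pow_mul_monomial_mapDomain_inr, ← hgG]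
  refine ⟨fun j _ => ?_, fun i hi0 hi j _ => ?_, fun i hi0 hi => ?_, fun j hj => ?_⟩
  · rw [hfilter, finrank_Abi_nagataPoly_zero hd₁']
  · obtain ⟨b, hb⟩ := exists_basis_Abi_nagataPoly_of_lt (K := K) (G := G) (by omega)
      (show i < d₁ by omega) j
    refine ⟨⟨b.reindex (Equiv.subtypeEquivRight fun p => and_congr_right' (hsub _ _).symm),
      fun p => ?_⟩, finrank_Abi_nagataPoly_of_lt hG (by omega) (by omega) j⟩
    rw [Module.Basis.reindex_apply, hb, X_inl_pow_mul_monomial_mapDomain_inr]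
    rfl
  · rcases (show i < d₁ ∨ i = d₁ by omega) with hi | rfl
    · rw [finrank_Abi_nagataPoly_of_lt hG (by omega) hi, Nat.choose_zero_right, mul_one]
    · have hGinj : Function.Injective G := fun r r' h => hginj (by rw [hgG, hgG, h])
      rw [finrank_Abi_nagataPoly_top hd₁' hG (Nat.zero_le _), Nat.sub_zero]
      convert card_filter_powersetCard_exists_subset hGinj hG
      exact (Fintype.card_fin _).symm
  · rw [hfilter, finrank_Abi_nagataPoly_top hd₁' hG hj]

open MvPolynomial in
theorem stmt_5 {K : Type*} [Field K] [CharZero K] (n m d₁ d₂ : ℕ)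
    (hd₁ : 1 ≤ d₁) (hd₂ : 2 ≤ d₂)
    (g : Fin (n + 1) → (Fin m →₀ ℕ))
    (hgdeg : ∀ r, (∑ k, g r k) = d₂)
    (hginj : Function.Injective g)
    (hsqfree : ∀ r k, g r k ≤ 1)
    (f : MvPolynomial (Fin (n + 1) ⊕ Fin m) K)
    (hf : f = ∑ r, X (Sum.inl r) ^ d₁ * monomial ((g r).mapDomain Sum.inr) 1) :
    -- `dim A_(0,j)` is the number of `j`-element subsets whose product divides some `g_r`
    (∀ j ≤ d₂, Module.finrank K (Abi f 0 j) =
      (((Finset.univ : Finset (Fin m)).powersetCard j).filter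
        fun F => ∃ r, ∀ k ∈ F, 1 ≤ g r k).card) ∧
    -- for `1 ≤ i ≤ d₁ - 1`, `dim A_(i,j) = (n+1)·C(d₂,j)`, with the stated basis
    (∀ i, 1 ≤ i → i ≤ d₁ - 1 → ∀ j ≤ d₂,
      (∃ b : Module.Basis {p : Fin (n + 1) × Finset (Fin m) //
          p.2.card = j ∧ ∀ k ∈ p.2, 1 ≤ g p.1 k} K (Abi f i j),
        ∀ p, (b p : MvPolynomial (Fin (n + 1) ⊕ Fin m) K ⧸ cAnn f) =
          Ideal.Quotient.mk (cAnn f)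
            (X (Sum.inl (p : Fin (n + 1) × Finset (Fin m)).1) ^ i *
              monomial ((∑ k ∈ (p : Fin (n + 1) × Finset (Fin m)).2,
                Finsupp.single k 1).mapDomain Sum.inr) 1)) ∧
      Module.finrank K (Abi f i j) = (n + 1) * d₂.choose j) ∧
    -- `dim A_(i,0) = n + 1` for `1 ≤ i ≤ d₁`
    (∀ i, 1 ≤ i → i ≤ d₁ → Module.finrank K (Abi f i 0) = n + 1) ∧
    -- `dim A_(d₁,j)` is the number of `(d₂-j)`-element subsets whose product
    -- divides some `g_r`
    (∀ j ≤ d₂, Module.finrank K (Abi f d₁ j) =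
      (((Finset.univ : Finset (Fin m)).powersetCard (d₂ - j)).filter
        fun F => ∃ r, ∀ k ∈ F, 1 ≤ g r k).card) :=
  stmt_5_general n m d₁ d₂ hd₁ g hgdeg hginj hsqfree f hf

end CW
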